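/- Define Ēₙ(f) = limsup_{x→∞} (Sⁿf)(x) for f ∈ L^∞(ℝ₊), where S is (Sg)(x)=e^{-x}∫₀ˣ g(t)eᵗdt. Then for every f, M̄₁(f) ≤ Ēₙ(f) for all n ≥ 1, where M̄₁(f) = lim_{θ→∞} limsup_{x→∞}(1/θ)∫ₓ^{x+θ} f(t)dt. In particular M̄₁(f) ≤ lim_{n→∞} Ēₙ(f) =: Ē_∞(f). -/

import Mathlib

/-!
Since `(Sg)' = g - Sg` almost everywhere and `Sg` is absolutely continuous,
`∫ₓʸ g - ∫ₓʸ Sg = Sg y - Sg x`; moreover `S` does not increase `sup_{t ≥ 0} |g t|`.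
Iterating, the integrals of `f` and `Sⁿf` over a window `[x, x + θ] ⊆ ℝ₊` differ by at most
`2nC`, which disappears from the window averages as `θ → ∞`. Hence the averages of `f` are
eventually below any `b > limsup Sⁿf`.
-/

open Filter MeasureTheory Set

noncomputable def Sop (f : ℝ → ℝ) (x : ℝ) : ℝ :=
  Real.exp (-x) * ∫ t in (0:ℝ)..x, f t * Real.exp t

noncomputable def M1 (f : ℝ → ℝ) : ℝ :=
  limsup (fun θ : ℝ =>
    limsup (fun x : ℝ => (1/θ) * ∫ t in x..(x+θ), f t) atTop) atTop

/-- `Ēₙ(f) = limsup_{x→∞} (Sⁿf)(x)`. -/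
noncomputable def En (f : ℝ → ℝ) (n : ℕ) : ℝ := limsup (Sop^[n] f) atTop

section Sop

variable {g : ℝ → ℝ}

lemma MeasureTheory.LocallyIntegrable.intervalIntegrable (hg : LocallyIntegrable g) (a b : ℝ) :
    IntervalIntegrable g volume a b :=
  (hg.integrableOn_isCompact isCompact_uIcc).intervalIntegrable

lemma continuous_Sop (hg : LocallyIntegrable g) : Continuous (Sop g) :=
  (Real.continuous_exp.comp continuous_neg).mul <| intervalIntegral.continuous_primitive
    ((hg.mul_continuous Real.continuous_exp).intervalIntegrable) 0

lemma ae_hasDerivAt_Sop (hg : LocallyIntegrable g) :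
    ∀ᵐ x, HasDerivAt (Sop g) (g x - Sop g x) x := by
  filter_upwards [_root_.LocallyIntegrable.ae_hasDerivAt_integral
    (hg.mul_continuous Real.continuous_exp)] with x hx
  refine (((hasDerivAt_neg x).exp).mul (hx 0)).congr_deriv ?_
  rw [Sop, Real.exp_neg]
  field_simp
  ring

lemma absolutelyContinuousOnInterval_Sop (hg : LocallyIntegrable g) (a b : ℝ) :
    AbsolutelyContinuousOnInterval (Sop g) a b := by
  -- enlarge the interval so that it contains the base point `0` of the primitive
  set R := max |a| |b|
  have hsub : uIcc a b ⊆ uIcc (-R) R := uIcc_subset_uIcc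
    (by rw [mem_uIcc]; left; exact abs_le.1 (le_max_left _ _))
    (by rw [mem_uIcc]; left; exact abs_le.1 (le_max_right _ _))
  refine AbsolutelyContinuousOnInterval.mono ?_ hsub
  refine AbsolutelyContinuousOnInterval.fun_mul ?_ ?_
  · exact (Real.contDiff_exp.comp contDiff_neg).contDiffOn.absolutelyContinuousOnInterval
  · refine ((hg.mul_continuous Real.continuous_exp).intervalIntegrable _ _)
      |>.absolutelyContinuousOnInterval_intervalIntegral ?_
    rw [mem_uIcc]; left; constructor <;> linarith [le_max_left |a| |b|, abs_nonneg a]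

theorem integral_sub_integral_Sop (hg : LocallyIntegrable g) (a b : ℝ) :
    (∫ t in a..b, g t) - ∫ t in a..b, Sop g t = Sop g b - Sop g a := by
  rw [← intervalIntegral.integral_sub (hg.intervalIntegrable a b)
    ((continuous_Sop hg).intervalIntegrable a b),
    ← (absolutelyContinuousOnInterval_Sop hg a b).integral_deriv_eq_sub]
  refine intervalIntegral.integral_congr_ae ?_
  filter_upwards [ae_hasDerivAt_Sop hg] with x hx _ using hx.deriv.symm

lemma abs_Sop_le {C x : ℝ} (hgC : ∀ t, 0 ≤ t → |g t| ≤ C) (hx : 0 ≤ x) : |Sop g x| ≤ C := by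
  have hC : 0 ≤ C := (abs_nonneg _).trans (hgC 0 le_rfl)
  have hint : |∫ t in (0:ℝ)..x, g t * Real.exp t| ≤ ∫ t in (0:ℝ)..x, C * Real.exp t := by
    rw [← Real.norm_eq_abs]
    refine intervalIntegral.norm_integral_le_of_norm_le hx (ae_of_all _ fun t ht => ?_)
      ((by fun_prop : Continuous fun t => C * Real.exp t).intervalIntegrable _ _)
    rw [Real.norm_eq_abs, abs_mul, Real.abs_exp]
    exact mul_le_mul_of_nonneg_right (hgC t ht.1.le) (Real.exp_pos t).le
  calc |Sop g x| = Real.exp (-x) * |∫ t in (0:ℝ)..x, g t * Real.exp t| := by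
        rw [Sop, abs_mul, Real.abs_exp]
    _ ≤ Real.exp (-x) * ∫ t in (0:ℝ)..x, C * Real.exp t := by gcongr
    _ = C - C * Real.exp (-x) := by
        rw [intervalIntegral.integral_const_mul, integral_exp, Real.exp_zero, Real.exp_neg]
        field_simp
    _ ≤ C := sub_le_self _ (by positivity)

lemma locallyIntegrable_iterate_Sop (hg : LocallyIntegrable g) :
    ∀ n, LocallyIntegrable (Sop^[n] g)
  | 0 => hg
  | n + 1 => by
    rw [Function.iterate_succ_apply']
    exact (continuous_Sop (locallyIntegrable_iterate_Sop hg n)).locallyIntegrable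

lemma abs_iterate_Sop_le {C : ℝ} (hgC : ∀ t, 0 ≤ t → |g t| ≤ C) :
    ∀ n t, 0 ≤ t → |Sop^[n] g t| ≤ C
  | 0 => hgC
  | n + 1 => by
    rw [Function.iterate_succ']
    exact fun t ht => abs_Sop_le (abs_iterate_Sop_le hgC n) ht

theorem abs_integral_sub_integral_iterate_Sop_le (hg : LocallyIntegrable g) {C a b : ℝ}
    (hgC : ∀ t, 0 ≤ t → |g t| ≤ C) (ha : 0 ≤ a) (hb : 0 ≤ b) :
    ∀ n : ℕ, |(∫ t in a..b, g t) - ∫ t in a..b, Sop^[n] g t| ≤ 2 * C * n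
  | 0 => by simp
  | n + 1 => by
    have hstep := integral_sub_integral_Sop (locallyIntegrable_iterate_Sop hg n) a b
    have ih := abs_integral_sub_integral_iterate_Sop_le hg hgC ha hb n
    have hSa := abs_iterate_Sop_le hgC (n + 1) a ha
    have hSb := abs_iterate_Sop_le hgC (n + 1) b hb
    rw [Function.iterate_succ_apply'] at hSa hSb ⊢
    rw [abs_le] at *
    push_cast
    constructor <;> linarith

end Sop

section Averages

variable {f g : ℝ → ℝ} {C : ℝ}

lemma abs_average_le (hf : ∀ t, |f t| ≤ C) (θ x : ℝ) :
    |(1/θ) * ∫ t in x..(x+θ), f t| ≤ C := by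
  rcases eq_or_ne θ 0 with rfl | hθ
  · simpa using (abs_nonneg _).trans (hf 0)
  have hint : |∫ t in x..(x+θ), f t| ≤ C * |θ| := by
    simpa using intervalIntegral.norm_integral_le_of_norm_le_const (a := x) (b := x + θ)
      fun t _ => (Real.norm_eq_abs (f t)).trans_le (hf t)
  calc |(1/θ) * ∫ t in x..(x+θ), f t| ≤ |1/θ| * (C * |θ|) := by
        rw [abs_mul]; gcongr
    _ = C := by rw [abs_div, abs_one]; field_simp [abs_ne_zero.2 hθ]

lemma neg_le_limsup_average (hf : ∀ t, |f t| ≤ C) (θ : ℝ) :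
    -C ≤ limsup (fun x : ℝ => (1/θ) * ∫ t in x..(x+θ), f t) atTop :=
  le_limsup_of_frequently_le (Frequently.of_forall fun x => (abs_le.1 (abs_average_le hf θ x)).1)
    (isBoundedUnder_of ⟨C, fun x => (abs_le.1 (abs_average_le hf θ x)).2⟩)

lemma limsup_average_le_add_div {θ K b : ℝ} (hf : ∀ t, |f t| ≤ C) (hg : LocallyIntegrable g)
    (hθ : 0 < θ) (hK : ∀ x, 0 ≤ x → (∫ t in x..(x+θ), f t) - ∫ t in x..(x+θ), g t ≤ K)
    (hgb : ∀ᶠ x in atTop, g x ≤ b) :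
    limsup (fun x : ℝ => (1/θ) * ∫ t in x..(x+θ), f t) atTop ≤ b + K / θ := by
  obtain ⟨x₀, hx₀⟩ := eventually_atTop.1 hgb
  refine limsup_le_of_le (isCoboundedUnder_le_of_le atTop fun x =>
    (abs_le.1 (abs_average_le hf θ x)).1) ?_
  filter_upwards [eventually_ge_atTop (max x₀ 0)] with x hx
  have hint : ∫ t in x..(x+θ), g t ≤ b * θ := by
    calc ∫ t in x..(x+θ), g t ≤ ∫ _ in x..(x+θ), b :=
          intervalIntegral.integral_mono_on (by linarith) (hg.intervalIntegrable _ _)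
            intervalIntegrable_const fun t ht => hx₀ t ((le_max_left _ _).trans (hx.trans ht.1))
      _ = b * θ := by simp [mul_comm]
  calc (1/θ) * ∫ t in x..(x+θ), f t ≤ (1/θ) * (b * θ + K) := by
        gcongr
        linarith [hK x ((le_max_right _ _).trans hx)]
    _ = b + K / θ := by field_simp

theorem M1_le_limsup (hf : ∀ t, |f t| ≤ C) (hg : LocallyIntegrable g)
    (hgb : IsBoundedUnder (· ≤ ·) atTop g) {K : ℝ}
    (hK : ∀ x θ, 0 ≤ x → 0 ≤ θ → (∫ t in x..(x+θ), f t) - ∫ t in x..(x+θ), g t ≤ K) :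
    M1 f ≤ limsup g atTop := by
  refine le_of_forall_gt_imp_ge_of_dense fun b hb => ?_
  have hlim : Tendsto (fun θ : ℝ => b + K / θ) atTop (nhds b) := by
    simpa using tendsto_const_nhds.add ((tendsto_const_nhds (x := K)).div_atTop tendsto_id)
  calc M1 f ≤ limsup (fun θ : ℝ => b + K / θ) atTop := by
        refine limsup_le_limsup ?_ (isCoboundedUnder_le_of_le atTop (neg_le_limsup_average hf))
          hlim.isBoundedUnder_le
        filter_upwards [eventually_gt_atTop 0] with θ hθ
        exact limsup_average_le_add_div hf hg hθ (fun x hx => hK x θ hx hθ.le)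
          ((eventually_lt_of_limsup_lt hb hgb).mono fun _ => le_of_lt)
    _ = b := hlim.limsup_eq

end Averages

/-- `M̄₁(f) ≤ Ēₙ(f)` for all `n ≥ 1`; in particular `M̄₁(f) ≤ Ē_∞(f) = lim_n Ēₙ(f)`. -/
theorem stmt16 (f : ℝ → ℝ) (C : ℝ) (hf : Measurable f) (hbd : ∀ x, |f x| ≤ C) :
    (∀ n : ℕ, 1 ≤ n → M1 f ≤ En f n) ∧
    (∀ L : ℝ, Tendsto (fun n : ℕ => En f n) atTop (nhds L) → M1 f ≤ L) := by
  have hfi : LocallyIntegrable f :=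
    (memLp_top_of_bound hf.aestronglyMeasurable C (ae_of_all _ hbd)).locallyIntegrable le_top
  have key : ∀ n, M1 f ≤ En f n := fun n =>
    M1_le_limsup hbd (locallyIntegrable_iterate_Sop hfi n)
      (isBoundedUnder_of_eventually_le (eventually_atTop.2
        ⟨0, fun t ht => (abs_le.1 (abs_iterate_Sop_le (fun t _ => hbd t) n t ht)).2⟩))
      fun x θ hx hθ => (le_abs_self _).trans
        (abs_integral_sub_integral_iterate_Sop_le hfi (fun t _ => hbd t) hx (by linarith) n)
  exact ⟨fun n _ => key n, fun L hL => ge_of_tendsto' hL key⟩
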